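/- Let p be a real polynomial whose Julia set is real, with a = min J(p) and b = max J(p). Then p maps the two-point set {a, b} into itself; consequently, either one of a, b is a fixed point of p, or {a, b} is a 2-cycle of p. -/

import Mathlib

/-- The filled Julia set of a polynomial: points with bounded forward orbit. -/
def filledJuliaSet (p : Polynomial ℂ) : Set ℂ :=
  {z | Bornology.IsBounded (Set.range fun n => (fun w => p.eval w)^[n] z)}

/-- The Julia set of a polynomial, as the boundary of the filled Julia set. -/
def juliaSet (p : Polynomial ℂ) : Set ℂ := frontier (filledJuliaSet p)

/-!
Outside a large disc `|p z| ≥ 2 |z|`, so the filled Julia set `K` is compact; it is also completely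
invariant. A point of `K` off the real axis could be pushed vertically away from the axis until it
meets `∂K = J`, so `K ⊆ ℝ`; hence `K` has empty interior and `J = K`.

On the real line `K ⊆ [a, b]` and `p⁻¹(K) = K`, while `|p x| → ∞` beyond both endpoints. Choosing
`x > b` with `p x ∉ [a, b]`, the intermediate value theorem gives `y ∈ [b, x]` with `p y ∈ {a, b}`;
then `y ∈ K` forces `y = b`, so `p b ∈ {a, b}`. The endpoint `a` is symmetric.
-/

open Filter Bornology Set Polynomial

theorem IsPreconnected.inter_frontier_nonempty {X : Type*} [TopologicalSpace X] {s t : Set X}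
    (hs : IsPreconnected s) (hst : (s ∩ t).Nonempty) (hsdt : (s \ t).Nonempty) :
    (s ∩ frontier t).Nonempty := by
  rw [frontier_eq_closure_inter_closure]
  refine isPreconnected_closed_iff.1 hs _ _ isClosed_closure isClosed_closure ?_
    (hst.mono (inter_subset_inter_right _ subset_closure))
    (hsdt.mono (inter_subset_inter_right _ subset_closure))
  exact fun x _ => (em (x ∈ t)).imp (subset_closure ·) (subset_closure ·)

theorem Bornology.IsBounded.exists_nonneg_add_smul_mem_frontier {E : Type*}
    [NormedAddCommGroup E] [NormedSpace ℝ E] {K : Set E} (hK : IsBounded K) {z v : E}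
    (hz : z ∈ K) (hv : v ≠ 0) : ∃ t : ℝ, 0 ≤ t ∧ z + t • v ∈ frontier K := by
  have hray : IsPreconnected ((fun t : ℝ => z + t • v) '' Ici 0) :=
    isPreconnected_Ici.image _ (by fun_prop)
  obtain ⟨r, hr⟩ := hK.subset_closedBall z
  have hvpos : 0 < ‖v‖ := norm_pos_iff.2 hv
  have hfar : z + ((|r| + 1) / ‖v‖) • v ∉ K := fun h => by
    have := hr h
    rw [Metric.mem_closedBall, dist_eq_norm, add_sub_cancel_left, norm_smul, Real.norm_eq_abs,
      abs_of_pos (by positivity), div_mul_cancel₀ _ hvpos.ne'] at this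
    linarith [le_abs_self r]
  obtain ⟨_, ⟨t, ht, rfl⟩, hfr⟩ := hray.inter_frontier_nonempty
    ⟨z, ⟨0, mem_Ici.2 le_rfl, by simp⟩, hz⟩ ⟨_, ⟨_, mem_Ici.2 (by positivity), rfl⟩, hfar⟩
  exact ⟨t, ht, hfr⟩

theorem Bornology.IsBounded.im_eq_zero_of_frontier {K : Set ℂ} (hK : IsBounded K)
    (hfr : ∀ w ∈ frontier K, w.im = 0) {z : ℂ} (hz : z ∈ K) : z.im = 0 := by
  by_contra him
  obtain ⟨t, ht, hw⟩ := hK.exists_nonneg_add_smul_mem_frontier hz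
    (v := z.im • Complex.I) (by simpa using him)
  have := hfr _ hw
  simp only [Complex.add_im, Complex.real_smul, Complex.mul_im, Complex.ofReal_re,
    Complex.ofReal_im, Complex.I_re, Complex.I_im] at this
  have : (1 + t) * z.im = 0 := by linarith
  exact him ((mul_eq_zero.1 this).resolve_left (by positivity))

theorem Complex.interior_eq_empty_of_im_eq_zero {K : Set ℂ} (hK : ∀ z ∈ K, z.im = 0) :
    interior K = ∅ := by
  have : interior K ⊆ interior (im ⁻¹' {0}) := interior_mono hK
  rwa [Complex.interior_preimage_im, interior_singleton, preimage_empty, subset_empty_iff] at this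

theorem Polynomial.exists_two_mul_norm_le_norm_eval {𝕜 : Type*} [NormedField 𝕜] {P : 𝕜[X]}
    (hd : 1 < P.natDegree) : ∃ R > 0, ∀ z : 𝕜, R ≤ ‖z‖ → 2 * ‖z‖ ≤ ‖P.eval z‖ := by
  have hQ : 0 < P.divX.degree := by
    rw [natDegree_pos_iff_degree_pos.symm, natDegree_divX_eq_natDegree_tsub_one]; omega
  have hev : ∀ᶠ z in cobounded 𝕜, 3 ≤ ‖P.divX.eval z‖ ∧ ‖P.coeff 0‖ ≤ ‖z‖ ∧ 1 ≤ ‖z‖ :=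
    ((P.divX.tendsto_norm_atTop hQ tendsto_norm_cobounded_atTop).eventually_ge_atTop 3).and
      ((eventually_cobounded_le_norm _).and (eventually_cobounded_le_norm 1))
  obtain ⟨R, -, hR⟩ := hasBasis_cobounded_norm.eventually_iff.1 hev
  refine ⟨max R 1, by positivity, fun z hz => ?_⟩
  obtain ⟨hQz, hcz, -⟩ := hR (le_of_max_le_left hz)
  have hPz : P.eval z = P.divX.eval z * z + P.coeff 0 := by
    conv_lhs => rw [← divX_mul_X_add P]
    simp
  calc 2 * ‖z‖ ≤ ‖P.divX.eval z‖ * ‖z‖ - ‖P.coeff 0‖ := by nlinarith [norm_nonneg z]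
    _ ≤ ‖P.eval z‖ := by
      have := norm_sub_le (P.divX.eval z * z + P.coeff 0) (P.coeff 0)
      rw [add_sub_cancel_right, norm_mul] at this
      rw [hPz]
      linarith

theorem two_pow_mul_norm_le_norm_iterate {E : Type*} [SeminormedAddCommGroup E] {f : E → E}
    {R : ℝ} (hf : ∀ z, R ≤ ‖z‖ → 2 * ‖z‖ ≤ ‖f z‖) {z : E} (hz : R ≤ ‖z‖) (n : ℕ) :
    2 ^ n * ‖z‖ ≤ ‖f^[n] z‖ := by
  induction n with
  | zero => simp
  | succ n ih =>
    have hle : ‖z‖ ≤ 2 ^ n * ‖z‖ := le_mul_of_one_le_left (norm_nonneg z) (one_le_pow₀ one_le_two)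
    rw [pow_succ', mul_assoc, Function.iterate_succ_apply']
    exact (mul_le_mul_of_nonneg_left ih zero_le_two).trans (hf _ (hz.trans (hle.trans ih)))

theorem not_isBounded_range_iterate {E : Type*} [SeminormedAddCommGroup E] {f : E → E}
    {R : ℝ} (hR : 0 < R) (hf : ∀ z, R ≤ ‖z‖ → 2 * ‖z‖ ≤ ‖f z‖) {z : E} (hz : R ≤ ‖z‖) :
    ¬IsBounded (range fun n => f^[n] z) := by
  intro hb
  obtain ⟨C, hC⟩ := hb.exists_norm_le
  obtain ⟨n, hn⟩ := pow_unbounded_of_one_lt (C / ‖z‖) one_lt_two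
  have hzpos : 0 < ‖z‖ := hR.trans_le hz
  rw [div_lt_iff₀ hzpos] at hn
  linarith [two_pow_mul_norm_le_norm_iterate hf hz n, hC _ (mem_range_self n)]

section FilledJuliaSet

variable {P : ℂ[X]} {z : ℂ}

theorem eval_mem_filledJuliaSet_iff : P.eval z ∈ filledJuliaSet P ↔ z ∈ filledJuliaSet P := by
  have horbit : (range fun n => (fun w => P.eval w)^[n] z) =
      insert z (range fun n => (fun w => P.eval w)^[n] (P.eval z)) := by
    ext w
    simp only [mem_range, mem_insert_iff, ← Function.iterate_succ_apply]
    constructor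
    · rintro ⟨_ | n, rfl⟩
      exacts [Or.inl rfl, Or.inr ⟨n, rfl⟩]
    · rintro (rfl | ⟨n, rfl⟩)
      exacts [⟨0, rfl⟩, ⟨n + 1, rfl⟩]
  simp only [filledJuliaSet, mem_ofPred_eq, horbit, isBounded_insert]

theorem iterate_mem_filledJuliaSet (hz : z ∈ filledJuliaSet P) (n : ℕ) :
    (fun w => P.eval w)^[n] z ∈ filledJuliaSet P := by
  induction n with
  | zero => exact hz
  | succ n ih => rwa [Function.iterate_succ_apply', eval_mem_filledJuliaSet_iff]

theorem filledJuliaSet_eq_iInter_preimage_closedBall {R : ℝ} (hR : 0 < R)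
    (hesc : ∀ z : ℂ, R ≤ ‖z‖ → 2 * ‖z‖ ≤ ‖P.eval z‖) :
    filledJuliaSet P = ⋂ n : ℕ, (fun w => P.eval w)^[n] ⁻¹' Metric.closedBall 0 R := by
  ext z
  simp only [mem_iInter, mem_preimage, mem_closedBall_zero_iff]
  constructor
  · intro hz n
    by_contra! hlt
    exact not_isBounded_range_iterate hR hesc hlt.le (iterate_mem_filledJuliaSet hz n)
  · intro hz
    refine (Metric.isBounded_closedBall (x := (0 : ℂ)) (r := R)).subset ?_
    rintro _ ⟨n, rfl⟩
    exact mem_closedBall_zero_iff.2 (hz n)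

theorem isClosed_filledJuliaSet (hd : 1 < P.natDegree) : IsClosed (filledJuliaSet P) := by
  obtain ⟨R, hR, hesc⟩ := exists_two_mul_norm_le_norm_eval hd
  rw [filledJuliaSet_eq_iInter_preimage_closedBall hR hesc]
  exact isClosed_iInter fun n => Metric.isClosed_closedBall.preimage (P.continuous.iterate n)

theorem isBounded_filledJuliaSet (hd : 1 < P.natDegree) : IsBounded (filledJuliaSet P) := by
  obtain ⟨R, hR, hesc⟩ := exists_two_mul_norm_le_norm_eval hd
  rw [filledJuliaSet_eq_iInter_preimage_closedBall hR hesc]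
  exact Metric.isBounded_closedBall.subset (iInter_subset_of_subset 0 subset_rfl)

theorem juliaSet_eq_filledJuliaSet (hd : 1 < P.natDegree)
    (hJ : ∀ z ∈ juliaSet P, z.im = 0) : juliaSet P = filledJuliaSet P := by
  have hreal : ∀ z ∈ filledJuliaSet P, z.im = 0 :=
    fun _ hz => (isBounded_filledJuliaSet hd).im_eq_zero_of_frontier hJ hz
  rw [juliaSet, frontier, (isClosed_filledJuliaSet hd).closure_eq,
    Complex.interior_eq_empty_of_im_eq_zero hreal, sdiff_empty]

end FilledJuliaSet

section RealEndpoints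

variable {f : ℝ → ℝ} {S : Set ℝ} {a b : ℝ}

theorem apply_eq_or_eq_of_uIcc_inter_subset {c x : ℝ} (hf : ContinuousOn f (uIcc c x))
    (hpre : ∀ y, f y ∈ S → y ∈ S) (ha : a ∈ S) (hb : b ∈ S) (hc : uIcc c x ∩ S ⊆ {c})
    (hfc : f c ∈ Icc a b) (hfx : f x ∉ Icc a b) :
    f c = a ∨ f c = b := by
  have hhit : ∃ e ∈ ({a, b} : Set ℝ), e ∈ uIcc (f c) (f x) := by
    rcases not_and_or.1 hfx with hxa | hxb
    · exact ⟨a, Or.inl rfl, mem_uIcc.2 (Or.inr ⟨(not_le.1 hxa).le, hfc.1⟩)⟩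
    · exact ⟨b, Or.inr rfl, mem_uIcc.2 (Or.inl ⟨hfc.2, (not_le.1 hxb).le⟩)⟩
  obtain ⟨e, he, hecx⟩ := hhit
  obtain ⟨y, hy, rfl⟩ := intermediate_value_uIcc hf hecx
  have heS : f y ∈ S := by rcases he with h | h <;> rw [h] <;> assumption
  rwa [hc ⟨hy, hpre y heS⟩] at he

theorem apply_mem_pair_of_isLeast_of_isGreatest (hf : Continuous f)
    (hbot : Tendsto (|f ·|) atBot atTop) (htop : Tendsto (|f ·|) atTop atTop)
    (hS : ∀ x, f x ∈ S ↔ x ∈ S) (ha : IsLeast S a) (hb : IsGreatest S b) :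
    f a ∈ ({a, b} : Set ℝ) ∧ f b ∈ ({a, b} : Set ℝ) := by
  have hSab : ∀ y ∈ S, y ∈ Icc a b := fun y hy => ⟨ha.2 hy, hb.2 hy⟩
  have hescape : ∀ l : Filter ℝ, Tendsto (|f ·|) l atTop → ∀ᶠ x in l, f x ∉ Icc a b :=
    fun l hl => (hl.eventually_gt_atTop (max |a| |b|)).mono fun x hx hfx =>
      (abs_le_max_abs_abs hfx.1 hfx.2).not_gt hx
  obtain ⟨x₀, hx₀, hx₀a⟩ := ((hescape _ hbot).and (eventually_lt_atBot a)).exists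
  obtain ⟨x₁, hx₁, hx₁b⟩ := ((hescape _ htop).and (eventually_gt_atTop b)).exists
  have hpre y := (hS y).1
  refine ⟨apply_eq_or_eq_of_uIcc_inter_subset hf.continuousOn hpre ha.1 hb.1 ?_
      (hSab _ ((hS a).2 ha.1)) hx₀,
    apply_eq_or_eq_of_uIcc_inter_subset hf.continuousOn hpre ha.1 hb.1 ?_
      (hSab _ ((hS b).2 hb.1)) hx₁⟩
  · rw [uIcc_of_ge hx₀a.le]
    exact fun y ⟨hy, hyS⟩ => le_antisymm hy.2 (ha.2 hyS)
  · rw [uIcc_of_le hx₁b.le]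
    exact fun y ⟨hy, hyS⟩ => le_antisymm (hb.2 hyS) hy.1

end RealEndpoints

/-- A real polynomial with real Julia set maps `{min J(p), max J(p)}` into itself;
consequently one of the endpoints is a fixed point, or they form a `2`-cycle. -/
theorem stmt_9 (p : Polynomial ℝ) (hd : 1 < p.natDegree)
    (hJ : ∀ z ∈ juliaSet (p.map (algebraMap ℝ ℂ)), z.im = 0)
    (a b : ℝ)
    (ha : IsLeast {x : ℝ | (x : ℂ) ∈ juliaSet (p.map (algebraMap ℝ ℂ))} a)
    (hb : IsGreatest {x : ℝ | (x : ℂ) ∈ juliaSet (p.map (algebraMap ℝ ℂ))} b) :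
    (p.eval a ∈ ({a, b} : Set ℝ) ∧ p.eval b ∈ ({a, b} : Set ℝ)) ∧
      ((p.eval a = a ∨ p.eval b = b) ∨ (p.eval a = b ∧ p.eval b = a)) := by
  have hdC : 1 < (p.map (algebraMap ℝ ℂ)).natDegree := by rwa [natDegree_map]
  have hinv (x : ℝ) : ((p.eval x : ℝ) : ℂ) ∈ juliaSet (p.map (algebraMap ℝ ℂ)) ↔
      (x : ℂ) ∈ juliaSet (p.map (algebraMap ℝ ℂ)) := by
    have heval : (p.map (algebraMap ℝ ℂ)).eval (x : ℂ) = ((p.eval x : ℝ) : ℂ) := by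
      rw [eval_map_algebraMap]
      exact (ofReal_eval p x).symm
    rw [juliaSet_eq_filledJuliaSet hdC hJ, ← heval, eval_mem_filledJuliaSet_iff]
  have hdeg : 0 < p.degree := natDegree_pos_iff_degree_pos.1 (by omega)
  have hab := apply_mem_pair_of_isLeast_of_isGreatest p.continuous (p.abs_tendsto_atBot hdeg)
    (p.abs_tendsto_atTop hdeg) hinv ha hb
  refine ⟨hab, ?_⟩
  simp only [mem_insert_iff, mem_singleton_iff] at hab
  tauto
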